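/- arXiv:2412.01022 — 3 statements merged into one kernel-verified Lean document; each statement's English description precedes it below -/
import Mathlib

section
/- Let E ⊆ ℝⁿ (n ≥ 2) be an open weakly 1-semiconvex set whose 1-nonsemiconvexity-point set E^◇ is nonempty. Then E^◇ is itself weakly 1-semiconvex, i.e., through every boundary point of E^◇ there passes a closed ray not intersecting E^◇. -/
open Set Metric

/-- The closed ray with endpoint `x` in direction `α`. -/
def ray {n : ℕ} (x α : EuclideanSpace ℝ (Fin n)) : Set (EuclideanSpace ℝ (Fin n)) :=
  {z | ∃ t : ℝ, 0 ≤ t ∧ z = x + t • α}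

/-- The straight line through `x` in direction `α`. -/
def line {n : ℕ} (x α : EuclideanSpace ℝ (Fin n)) : Set (EuclideanSpace ℝ (Fin n)) :=
  {z | ∃ t : ℝ, z = x + t • α}

/-- The set `E^◇` of 1-nonsemiconvexity points of `E`. -/
def diamond {n : ℕ} (E : Set (EuclideanSpace ℝ (Fin n))) : Set (EuclideanSpace ℝ (Fin n)) :=
  {x | x ∉ E ∧ ∀ α : EuclideanSpace ℝ (Fin n), ‖α‖ = 1 → (ray x α ∩ E).Nonempty}

/-- The set `E^△` of 1-nonconvexity points of `E`. -/
def triangle {n : ℕ} (E : Set (EuclideanSpace ℝ (Fin n))) : Set (EuclideanSpace ℝ (Fin n)) :=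
  {x | x ∉ E ∧ ∀ α : EuclideanSpace ℝ (Fin n), ‖α‖ = 1 → (line x α ∩ E).Nonempty}

/-- An (open) set is weakly 1-semiconvex if through every boundary point
there passes a closed ray missing the set. -/
def WeaklySemiconvex {n : ℕ} (E : Set (EuclideanSpace ℝ (Fin n))) : Prop :=
  ∀ x ∈ frontier E, ∃ α : EuclideanSpace ℝ (Fin n), ‖α‖ = 1 ∧ ray x α ∩ E = ∅

/-- An (open) set is weakly 1-convex if through every boundary point
there passes a straight line missing the set. -/
def WeaklyConvex {n : ℕ} (E : Set (EuclideanSpace ℝ (Fin n))) : Prop :=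
  ∀ x ∈ frontier E, ∃ α : EuclideanSpace ℝ (Fin n), ‖α‖ = 1 ∧ line x α ∩ E = ∅

/-!
A point of `E^◇` cannot lie on `∂E`, since a ray through a boundary point of `E` misses `E`; as
`E^◇ ⊆ Eᶜ`, it follows that `E^◇` lies outside `closure E`. There the defining property of `E^◇`
is open: a ray hitting the open set `E` keeps hitting it when its endpoint and direction are
perturbed, and by compactness of the unit sphere this is uniform in the direction. So `E^◇` is
open, and a boundary point `x` of it lies neither in `E^◇` nor in `E`, hence has a ray missing
`E`. That ray also misses `E^◇`, because from any of its points the subray in the same direction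
misses `E`.
-/

open Filter Topology

section

variable {n : ℕ} {E : Set (EuclideanSpace ℝ (Fin n))}

lemma ray_subset_ray {x α z : EuclideanSpace ℝ (Fin n)} (hz : z ∈ ray x α) :
    ray z α ⊆ ray x α := by
  obtain ⟨t, ht, rfl⟩ := hz
  rintro _ ⟨s, hs, rfl⟩
  exact ⟨t + s, add_nonneg ht hs, by rw [add_smul, add_assoc]⟩

lemma isOpen_setOf_ray_inter_nonempty (hE : IsOpen E) :
    IsOpen {p : EuclideanSpace ℝ (Fin n) × EuclideanSpace ℝ (Fin n) |
      (ray p.1 p.2 ∩ E).Nonempty} := by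
  have hset : {p : EuclideanSpace ℝ (Fin n) × EuclideanSpace ℝ (Fin n) |
      (ray p.1 p.2 ∩ E).Nonempty} = ⋃ t ∈ Ici (0 : ℝ), (fun p => p.1 + t • p.2) ⁻¹' E := by
    ext
    simp [ray, Set.Nonempty]
  rw [hset]
  exact isOpen_biUnion fun t _ => hE.preimage (by fun_prop)

lemma isOpen_diamond_diff_closure (hE : IsOpen E) : IsOpen (diamond E \ closure E) := by
  refine isOpen_iff_eventually.2 fun x ⟨hx, hxc⟩ => ?_
  have hrays : ∀ᶠ y in 𝓝 x, ∀ α ∈ sphere (0 : EuclideanSpace ℝ (Fin n)) 1,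
      (ray y α ∩ E).Nonempty :=
    (isCompact_sphere 0 1).eventually_forall_of_forall_eventually fun α hα =>
      (isOpen_setOf_ray_inter_nonempty hE).mem_nhds (hx.2 α (mem_sphere_zero_iff_norm.1 hα))
  filter_upwards [hrays, isClosed_closure.isOpen_compl.mem_nhds hxc] with y hy hyc
  exact ⟨⟨fun hyE => hyc (subset_closure hyE), fun α hα => hy α (mem_sphere_zero_iff_norm.2 hα)⟩,
    hyc⟩

lemma ray_inter_diamond_eq_empty {x α : EuclideanSpace ℝ (Fin n)} (hα : ‖α‖ = 1)
    (hray : ray x α ∩ E = ∅) :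
    ray x α ∩ diamond E = ∅ := by
  refine eq_empty_of_forall_notMem fun z ⟨hz, hzd⟩ => ?_
  obtain ⟨w, hw, hwE⟩ := hzd.2 α hα
  exact hray.subset ⟨ray_subset_ray hz hw, hwE⟩

lemma WeaklySemiconvex.diamond_subset_compl_closure (hE : IsOpen E) (hws : WeaklySemiconvex E) :
    diamond E ⊆ (closure E)ᶜ := by
  intro x hx hxc
  obtain ⟨α, hα, hray⟩ := hws x ⟨hxc, by rw [hE.interior_eq]; exact hx.1⟩
  exact (hx.2 α hα).ne_empty hray

lemma WeaklySemiconvex.isOpen_diamond (hE : IsOpen E) (hws : WeaklySemiconvex E) :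
    IsOpen (diamond E) := by
  have hdisj : Disjoint (closure E) (diamond E) :=
    subset_compl_iff_disjoint_left.1 (hws.diamond_subset_compl_closure hE)
  simpa only [sdiff_eq_self_iff_disjoint.2 hdisj] using isOpen_diamond_diff_closure hE

end

theorem diamond_weaklySemiconvex_general {n : ℕ} (E : Set (EuclideanSpace ℝ (Fin n)))
    (hE : IsOpen E) (hws : WeaklySemiconvex E) :
    WeaklySemiconvex (diamond E) := by
  intro x hx
  rw [(hws.isOpen_diamond hE).frontier_eq] at hx
  obtain ⟨hxcl, hxd⟩ := hx
  have hxE : x ∉ E := closure_minimal (fun y hy => hy.1) hE.isClosed_compl hxcl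
  obtain ⟨α, hα, hray⟩ : ∃ α : EuclideanSpace ℝ (Fin n), ‖α‖ = 1 ∧ ray x α ∩ E = ∅ := by
    by_contra! h
    exact hxd ⟨hxE, h⟩
  exact ⟨α, hα, ray_inter_diamond_eq_empty hα hray⟩

theorem diamond_weaklySemiconvex {n : ℕ} (hn : 2 ≤ n) (E : Set (EuclideanSpace ℝ (Fin n)))
    (hE : IsOpen E) (hws : WeaklySemiconvex E) (hne : (diamond E).Nonempty) :
    WeaklySemiconvex (diamond E) :=
  diamond_weaklySemiconvex_general E hE hws
end

section
/- Let E ⊆ ℝⁿ (n ≥ 2) be an open weakly 1-convex set whose 1-nonconvexity-point set E^△ is nonempty. Then E^△ is itself weakly 1-convex, i.e., through every boundary point of E^△ there passes a straight line not intersecting E^△. -/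
open Set Metric

/-!
Directions through a point form the compact unit sphere, so by the tube lemma the condition
"every line through `x` meets the open set `E`" is open in `x`. Weak 1-convexity of `E` keeps
`E^△` away from `closure E`, so `E^△` is open. A boundary point `x` of `E^△` therefore lies
neither in `E^△` nor in `E`, hence some line through `x` misses `E`; every point `z` of that line
has the same line through it, so `z ∉ E^△` as well.
-/

open Filter Topology

section

variable {n : ℕ}

theorem line_subset_of_mem {x z α : EuclideanSpace ℝ (Fin n)} (hz : z ∈ line x α) :
    line z α ⊆ line x α := by
  obtain ⟨t, rfl⟩ := hz
  rintro _ ⟨s, rfl⟩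
  exact ⟨t + s, by rw [add_smul, add_assoc]⟩

theorem isOpen_setOf_forall_line_inter_nonempty {E : Set (EuclideanSpace ℝ (Fin n))}
    (hE : IsOpen E) :
    IsOpen {x | ∀ α : EuclideanSpace ℝ (Fin n), ‖α‖ = 1 → (line x α ∩ E).Nonempty} := by
  refine isOpen_iff_eventually.2 fun x hx => ?_
  have hnear : ∀ α ∈ sphere (0 : EuclideanSpace ℝ (Fin n)) 1,
      ∀ᶠ p : EuclideanSpace ℝ (Fin n) × EuclideanSpace ℝ (Fin n) in 𝓝 (x, α),
        (line p.1 p.2 ∩ E).Nonempty := by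
    intro α hα
    obtain ⟨_, ⟨t, rfl⟩, hxtα⟩ := hx α (by simpa using hα)
    have hcont : Continuous fun p : EuclideanSpace ℝ (Fin n) × EuclideanSpace ℝ (Fin n) =>
        p.1 + t • p.2 := by fun_prop
    exact mem_of_superset
      (hcont.continuousAt.preimage_mem_nhds (x := (x, α)) (hE.mem_nhds hxtα))
      fun p hp => ⟨_, ⟨t, rfl⟩, hp⟩
  exact ((isCompact_sphere 0 1).eventually_forall_of_forall_eventually hnear).mono
    fun y hy α hα => hy α (by simpa using hα)

theorem disjoint_triangle_self (E : Set (EuclideanSpace ℝ (Fin n))) :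
    Disjoint (triangle E) E :=
  disjoint_left.2 fun _ hx => hx.1

theorem disjoint_triangle_closure {E : Set (EuclideanSpace ℝ (Fin n))} (hE : IsOpen E)
    (hwc : WeaklyConvex E) : Disjoint (triangle E) (closure E) := by
  refine disjoint_left.2 fun x hx hxc => ?_
  have hxf : x ∈ frontier E := ⟨hxc, by simpa [hE.interior_eq] using hx.1⟩
  obtain ⟨α, hα, hαE⟩ := hwc x hxf
  exact (hx.2 α hα).ne_empty hαE

theorem isOpen_triangle {E : Set (EuclideanSpace ℝ (Fin n))} (hE : IsOpen E)
    (hwc : WeaklyConvex E) : IsOpen (triangle E) := by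
  have htri : triangle E =
      {x | ∀ α : EuclideanSpace ℝ (Fin n), ‖α‖ = 1 → (line x α ∩ E).Nonempty} ∩ (closure E)ᶜ := by
    ext x
    exact ⟨fun hx => ⟨hx.2, (disjoint_triangle_closure hE hwc).notMem_of_mem_left hx⟩,
      fun hx => ⟨fun hxE => hx.2 (subset_closure hxE), hx.1⟩⟩
  rw [htri]
  exact (isOpen_setOf_forall_line_inter_nonempty hE).inter isClosed_closure.isOpen_compl

theorem exists_line_inter_eq_empty_of_notMem_triangle {E : Set (EuclideanSpace ℝ (Fin n))}
    {x : EuclideanSpace ℝ (Fin n)} (hxE : x ∉ E) (hx : x ∉ triangle E) :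
    ∃ α : EuclideanSpace ℝ (Fin n), ‖α‖ = 1 ∧ line x α ∩ E = ∅ := by
  simpa [triangle, hxE, ← not_nonempty_iff_eq_empty] using hx

theorem line_inter_triangle_eq_empty {E : Set (EuclideanSpace ℝ (Fin n))}
    {x α : EuclideanSpace ℝ (Fin n)} (hα : ‖α‖ = 1) (hxα : line x α ∩ E = ∅) :
    line x α ∩ triangle E = ∅ := by
  refine eq_empty_iff_forall_notMem.2 fun z ⟨hzx, hz⟩ => ?_
  obtain ⟨w, hwz, hwE⟩ := hz.2 α hα
  exact hxα.subset ⟨line_subset_of_mem hzx hwz, hwE⟩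

end

theorem triangle_weaklyConvex_general {n : ℕ} (E : Set (EuclideanSpace ℝ (Fin n)))
    (hE : IsOpen E) (hwc : WeaklyConvex E) :
    WeaklyConvex (triangle E) := by
  intro x hx
  have hxt : x ∉ triangle E := fun h =>
    ((isOpen_triangle hE hwc).inter_frontier_eq.subset ⟨h, hx⟩).elim
  have hxE : x ∉ E :=
    ((disjoint_triangle_self E).closure_left hE).notMem_of_mem_left (frontier_subset_closure hx)
  obtain ⟨α, hα, hxα⟩ := exists_line_inter_eq_empty_of_notMem_triangle hxE hxt
  exact ⟨α, hα, line_inter_triangle_eq_empty hα hxα⟩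

theorem triangle_weaklyConvex {n : ℕ} (hn : 2 ≤ n) (E : Set (EuclideanSpace ℝ (Fin n)))
    (hE : IsOpen E) (hwc : WeaklyConvex E) (hne : (triangle E).Nonempty) :
    WeaklyConvex (triangle E) :=
  triangle_weaklyConvex_general E hE hwc
end

section
/- There exists an open set E ⊆ ℝ³ that is both weakly 1-convex and weakly 1-semiconvex, such that its 1-nonconvexity-point set E^△ and its 1-nonsemiconvexity-point set E^◇ coincide and form a nonempty set that is unbounded, connected, and not convex. -/
/-!
Write `g = y - x²` (`shadow`) and take for `E` the set where the point `(g, z)` of the plane lies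
outside the closed square `[-1, 1]²` and off the four lines `|g| = 1`, `|z| = 1`. A point outside
`E` and outside the tube `D = {|g| < 1, |z| < 1}` has `|g| = 1` or `|z| = 1`, so the vertical line
(which fixes `g`) or the line parallel to the `y`-axis (which fixes `z`) through it misses `E`;
this covers the boundary of `E`. Along a ray from a point of `D`, `g` and `z` are polynomials in
the parameter, not both constant: a nonconstant one eventually exceeds `1` in absolute value and a
constant one stays in `(-1, 1)`, so the ray enters `E`. Hence `E^△ = E^◇ = D`, the image of the
convex slab `{|y| < 1, |z| < 1}` under the shear `(x, y, z) ↦ (x, y + x², z)`; it contains the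
parabola `(a, a², 0)` but not the midpoint `(0, 4, 0)` of `(±2, 4, 0)`.
-/

open Set Metric

section Abstract

variable {n : ℕ} {E D : Set (EuclideanSpace ℝ (Fin n))}

theorem ray_subset_line (x α : EuclideanSpace ℝ (Fin n)) : ray x α ⊆ line x α :=
  fun _ ⟨t, _, hz⟩ => ⟨t, hz⟩

theorem WeaklyConvex.weaklySemiconvex (h : WeaklyConvex E) : WeaklySemiconvex E := fun x hx =>
  let ⟨α, hα, hline⟩ := h x hx
  ⟨α, hα, subset_empty_iff.mp (hline ▸ inter_subset_inter_left E (ray_subset_line x α))⟩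

theorem diamond_subset_triangle : diamond E ⊆ triangle E := fun _ ⟨hxE, hrays⟩ =>
  ⟨hxE, fun α hα => (hrays α hα).mono (inter_subset_inter_left E (ray_subset_line _ α))⟩

theorem triangle_subset_of_forall_line_inter_eq_empty
    (hlines : ∀ x ∉ E, x ∉ D → ∃ α, ‖α‖ = 1 ∧ line x α ∩ E = ∅) : triangle E ⊆ D := by
  intro x ⟨hxE, hlines'⟩
  by_contra hxD
  obtain ⟨α, hα, hempty⟩ := hlines x hxE hxD
  exact (hlines' α hα).ne_empty hempty

theorem subset_diamond_of_forall_ray_inter_nonempty (hDE : Disjoint D E)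
    (hrays : ∀ x ∈ D, ∀ α ≠ 0, (ray x α ∩ E).Nonempty) : D ⊆ diamond E := fun x hx =>
  ⟨hDE.notMem_of_mem_left hx, fun α hα => hrays x hx α (norm_ne_zero_iff.mp (by simp [hα]))⟩

theorem weaklyConvex_of_forall_line_inter_eq_empty (hE : IsOpen E) (hD : IsOpen D)
    (hDE : Disjoint D E) (hlines : ∀ x ∉ E, x ∉ D → ∃ α, ‖α‖ = 1 ∧ line x α ∩ E = ∅) :
    WeaklyConvex E := by
  intro x hx
  rw [hE.frontier_eq] at hx
  exact hlines x hx.2 fun hxD => (hDE.closure_right hD).notMem_of_mem_left hxD hx.1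

theorem triangle_eq_and_diamond_eq (hDE : Disjoint D E)
    (hlines : ∀ x ∉ E, x ∉ D → ∃ α, ‖α‖ = 1 ∧ line x α ∩ E = ∅)
    (hrays : ∀ x ∈ D, ∀ α ≠ 0, (ray x α ∩ E).Nonempty) : triangle E = D ∧ diamond E = D :=
  have hsub := subset_diamond_of_forall_ray_inter_nonempty hDE hrays
  have hsup := triangle_subset_of_forall_line_inter_eq_empty hlines
  ⟨hsup.antisymm (hsub.trans diamond_subset_triangle),
    (diamond_subset_triangle.trans hsup).antisymm hsub⟩

end Abstract

open Filter Polynomial in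
theorem Polynomial.eventually_lt_abs_eval_or_degree_nonpos (P : ℝ[X]) (r : ℝ) :
    (∀ᶠ t : ℝ in atTop, r < |P.eval t|) ∨ P.degree ≤ 0 :=
  (le_or_gt P.degree 0).symm.imp_left fun (h : 0 < P.degree) =>
    (P.tendsto_norm_atTop h tendsto_norm_atTop_atTop).eventually_gt_atTop r

open Filter Polynomial in
theorem eventually_lt_abs_add_smul_apply_or_eq_zero {n : ℕ} (p α : EuclideanSpace ℝ (Fin n))
    (i : Fin n) (r : ℝ) : (∀ᶠ t : ℝ in atTop, r < |(p + t • α) i|) ∨ α i = 0 := by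
  have heval (t : ℝ) : (p + t • α) i = (C (p i) + C (α i) * X).eval t := by
    simp only [PiLp.add_apply, PiLp.smul_apply, smul_eq_mul, eval_add, eval_mul, eval_C, eval_X]
    ring
  refine ((C (p i) + C (α i) * X).eventually_lt_abs_eval_or_degree_nonpos r).imp
    (fun h => by simpa only [heval] using h) fun h => ?_
  simpa using coeff_eq_zero_of_degree_lt (n := 1) (h.trans_lt zero_lt_one)

namespace ParabolicTube

open Filter Polynomial

local notation "ℝ³" => EuclideanSpace ℝ (Fin 3)

def shadow (q : ℝ³) : ℝ := q 1 - q 0 ^ 2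

def outer : Set ℝ³ := {q | (1 < |shadow q| ∧ |q 2| ≠ 1) ∨ (1 < |q 2| ∧ |shadow q| ≠ 1)}

def tube : Set ℝ³ := {q | |shadow q| < 1 ∧ |q 2| < 1}

theorem continuous_shadow : Continuous shadow := by
  unfold shadow; fun_prop

theorem isOpen_outer : IsOpen outer :=
  have hz : Continuous fun q : ℝ³ => |q 2| := by fun_prop
  ((isOpen_lt continuous_const continuous_shadow.abs).inter
      (isOpen_ne_fun hz continuous_const)).union
    ((isOpen_lt continuous_const hz).inter
      (isOpen_ne_fun continuous_shadow.abs continuous_const))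

theorem isOpen_tube : IsOpen tube :=
  (isOpen_lt continuous_shadow.abs continuous_const).inter
    (isOpen_lt (by fun_prop : Continuous fun q : ℝ³ => |q 2|) continuous_const)

theorem disjoint_tube_outer : Disjoint tube outer :=
  Set.disjoint_left.mpr fun _ ⟨hg, hz⟩ h => by rcases h with ⟨h, _⟩ | ⟨h, _⟩ <;> linarith

theorem mem_outer_of_abs_ne_one {q : ℝ³} (hg : |shadow q| ≠ 1) (hz : |q 2| ≠ 1)
    (h : 1 < |shadow q| ∨ 1 < |q 2|) : q ∈ outer :=
  h.imp (fun h => ⟨h, hz⟩) fun h => ⟨h, hg⟩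

theorem notMem_outer_of_abs_shadow_eq_one {q : ℝ³} (h : |shadow q| = 1) : q ∉ outer := by
  rintro (⟨h', _⟩ | ⟨_, h'⟩) <;> simp_all

theorem notMem_outer_of_abs_apply_two_eq_one {q : ℝ³} (h : |q 2| = 1) : q ∉ outer := by
  rintro (⟨_, h'⟩ | ⟨h', _⟩) <;> simp_all

theorem abs_shadow_eq_one_or_abs_apply_two_eq_one {q : ℝ³} (hq : q ∉ outer) (hq' : q ∉ tube) :
    |shadow q| = 1 ∨ |q 2| = 1 := by
  by_contra! h
  rcases h.1.lt_or_gt with hg | hg <;> rcases h.2.lt_or_gt with hz | hz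
  · exact hq' ⟨hg, hz⟩
  all_goals exact hq (by unfold outer; tauto)

theorem shadow_add_smul_single_two (q : ℝ³) (t : ℝ) :
    shadow (q + t • EuclideanSpace.single 2 1) = shadow q := by
  simp [shadow]

theorem add_smul_single_one_apply_two (q : ℝ³) (t : ℝ) :
    (q + t • EuclideanSpace.single 1 1 : ℝ³) 2 = q 2 := by
  simp

theorem exists_line_inter_outer_eq_empty {q : ℝ³} (hq : q ∉ outer) (hq' : q ∉ tube) :
    ∃ α, ‖α‖ = 1 ∧ line q α ∩ outer = ∅ := by
  rcases abs_shadow_eq_one_or_abs_apply_two_eq_one hq hq' with h | h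
  · refine ⟨EuclideanSpace.single 2 1, by simp, eq_empty_iff_forall_notMem.mpr ?_⟩
    rintro _ ⟨⟨t, rfl⟩, hmem⟩
    exact notMem_outer_of_abs_shadow_eq_one (by rwa [shadow_add_smul_single_two]) hmem
  · refine ⟨EuclideanSpace.single 1 1, by simp, eq_empty_iff_forall_notMem.mpr ?_⟩
    rintro _ ⟨⟨t, rfl⟩, hmem⟩
    exact notMem_outer_of_abs_apply_two_eq_one (by rwa [add_smul_single_one_apply_two]) hmem

theorem shadow_add_smul (p α : ℝ³) (t : ℝ) :
    shadow (p + t • α) = shadow p + (α 1 - 2 * p 0 * α 0) * t - α 0 ^ 2 * t ^ 2 := by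
  simp only [shadow, PiLp.add_apply, PiLp.smul_apply, smul_eq_mul]
  ring

theorem eventually_lt_abs_shadow_add_smul_or (p α : ℝ³) (r : ℝ) :
    (∀ᶠ t : ℝ in atTop, r < |shadow (p + t • α)|) ∨ α 0 = 0 ∧ α 1 = 0 := by
  set P : ℝ[X] := C (shadow p) + C (α 1 - 2 * p 0 * α 0) * X - C (α 0 ^ 2) * X ^ 2
  have heval (t : ℝ) : shadow (p + t • α) = P.eval t := by
    simp only [P, shadow_add_smul, eval_add, eval_sub, eval_mul, eval_C, eval_X, eval_pow]
  refine (P.eventually_lt_abs_eval_or_degree_nonpos r).imp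
    (fun h => by simpa only [heval] using h) fun h => ?_
  have h1 := coeff_eq_zero_of_degree_lt (n := 1) (h.trans_lt (by norm_num))
  have h2 := coeff_eq_zero_of_degree_lt (n := 2) (h.trans_lt (by norm_num))
  simp only [P, coeff_add, coeff_sub, coeff_C_mul, coeff_X_pow, coeff_X, coeff_C] at h1 h2
  norm_num at h1 h2
  exact ⟨h2, by simpa [h2] using h1⟩

theorem exists_nonneg_add_smul_mem_outer {p α : ℝ³} (hp : p ∈ tube) (hα : α ≠ 0) :
    ∃ t : ℝ, 0 ≤ t ∧ p + t • α ∈ outer := by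
  suffices ∀ᶠ t : ℝ in atTop, p + t • α ∈ outer from
    ((eventually_ge_atTop 0).and this).exists
  rcases eventually_lt_abs_shadow_add_smul_or p α 1 with hg | ⟨h0, h1⟩ <;>
    rcases eventually_lt_abs_add_smul_apply_or_eq_zero p α 2 1 with hz | h2
  · filter_upwards [hg, hz] with t hg hz using mem_outer_of_abs_ne_one hg.ne' hz.ne' (.inl hg)
  · filter_upwards [hg] with t hg
    exact mem_outer_of_abs_ne_one hg.ne' (by simpa [h2] using hp.2.ne) (.inl hg)
  · filter_upwards [hz] with t hz
    refine mem_outer_of_abs_ne_one ?_ hz.ne' (.inr hz)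
    simpa [shadow_add_smul, h0, h1] using hp.1.ne
  · exact absurd (by ext i; fin_cases i <;> assumption) hα

theorem triangle_outer_eq_and_diamond_outer_eq : triangle outer = tube ∧ diamond outer = tube :=
  triangle_eq_and_diamond_eq disjoint_tube_outer (fun _ => exists_line_inter_outer_eq_empty)
    fun _ hp _ hα =>
      let ⟨t, ht, hmem⟩ := exists_nonneg_add_smul_mem_outer hp hα
      ⟨_, ⟨t, ht, rfl⟩, hmem⟩

theorem weaklyConvex_outer : WeaklyConvex outer :=
  weaklyConvex_of_forall_line_inter_eq_empty isOpen_outer isOpen_tube disjoint_tube_outer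
    fun _ => exists_line_inter_outer_eq_empty

noncomputable def shear (q : ℝ³) : ℝ³ := q + q 0 ^ 2 • EuclideanSpace.single 1 1

noncomputable def unshear (q : ℝ³) : ℝ³ := q - q 0 ^ 2 • EuclideanSpace.single 1 1

def slab : Set ℝ³ := {q | |q 1| < 1 ∧ |q 2| < 1}

theorem convex_slab : Convex ℝ slab := by
  have h (i : Fin 3) : Convex ℝ {q : ℝ³ | |q i| < 1} := by
    simp_rw [abs_lt]
    have hi := (EuclideanSpace.proj (𝕜 := ℝ) i).isLinear
    exact (convex_halfSpace_gt hi (-1)).inter (convex_halfSpace_lt hi 1)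
  exact (h 1).inter (h 2)

theorem tube_eq_image_shear : tube = shear '' slab := by
  rw [image_eq_preimage_of_inverse (g := unshear)]
  · ext q; simp [tube, slab, unshear, shadow, sub_eq_add_neg]
  · intro q; ext i; fin_cases i <;> simp [shear, unshear]
  · intro q; ext i; fin_cases i <;> simp [shear, unshear]

theorem isConnected_tube : IsConnected tube :=
  tube_eq_image_shear ▸ (convex_slab.isConnected ⟨0, by simp [slab]⟩).image shear
    (by unfold shear; fun_prop : Continuous shear).continuousOn

theorem parabola_mem_tube (a : ℝ) : !₂[a, a ^ 2, 0] ∈ tube := by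
  simp [tube, shadow]

theorem not_isBounded_tube : ¬ Bornology.IsBounded tube := by
  rw [isBounded_iff_forall_norm_le]
  rintro ⟨C, hC⟩
  have h := (PiLp.norm_apply_le _ 0).trans (hC _ (parabola_mem_tube (|C| + 1)))
  simp at h
  linarith [le_abs_self (|C| + 1), le_abs_self C]

theorem not_convex_tube : ¬ Convex ℝ tube := by
  intro h
  have hmid := (h (parabola_mem_tube 2) (parabola_mem_tube (-2)) (by norm_num : (0 : ℝ) ≤ 1 / 2)
    (by norm_num : (0 : ℝ) ≤ 1 / 2) (by norm_num)).1
  norm_num [shadow] at hmid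

end ParabolicTube

theorem exists_unbounded_nonconvex_example :
    ∃ E : Set (EuclideanSpace ℝ (Fin 3)), IsOpen E ∧ WeaklyConvex E ∧ WeaklySemiconvex E ∧
      triangle E = diamond E ∧ (triangle E).Nonempty ∧
      ¬ Bornology.IsBounded (triangle E) ∧ IsConnected (triangle E) ∧
      ¬ Convex ℝ (triangle E) := by
  open ParabolicTube in
  obtain ⟨htriangle, hdiamond⟩ := triangle_outer_eq_and_diamond_outer_eq
  refine ⟨outer, isOpen_outer, weaklyConvex_outer, weaklyConvex_outer.weaklySemiconvex,
    hdiamond ▸ htriangle, ?_⟩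
  rw [htriangle]
  exact ⟨isConnected_tube.nonempty, not_isBounded_tube, isConnected_tube, not_convex_tube⟩
end
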